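/- Let K be a quadratically closed field of characteristic not two, and let A, B be finite-dimensional evolution K-algebras with dim(A²) = dim(B²) = 1, (A²)² = (B²)² = 0, A³ ≠ 0 and B³ ≠ 0. Then A ≅ B if and only if dim(A) = dim(B) and dim(Ann(A)) = dim(Ann(B)). -/

import Mathlib

/-- `A²`: the linear span of all products in `A`. -/
def Asq (K A : Type*) [Field K] [NonUnitalNonAssocRing A] [Module K A] : Submodule K A :=
  Submodule.span K {z : A | ∃ x y : A, z = x * y}

/-- `(A²)²`: the linear span of all products of elements of `A²`. -/
def Asqsq (K A : Type*) [Field K] [NonUnitalNonAssocRing A] [Module K A] : Submodule K A :=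
  Submodule.span K {z : A | ∃ p ∈ Asq K A, ∃ q ∈ Asq K A, z = p * q}

/-- `A³`: the linear span of products of elements of `A²` with elements of `A`. -/
def Acube (K A : Type*) [Field K] [NonUnitalNonAssocRing A] [Module K A] : Submodule K A :=
  Submodule.span K {z : A | ∃ p ∈ Asq K A, ∃ y : A, z = p * y}

/-- The annihilator `Ann(A) = {x | xA = 0}` of a commutative nonassociative algebra,
as a submodule. -/
def annihilator (K : Type*) (A : Type*) [Field K] [NonUnitalNonAssocRing A] [Module K A]
    [IsScalarTower K A A] : Submodule K A where
  carrier := {x : A | ∀ y : A, x * y = 0}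
  add_mem' := by
    intro x y hx hy z
    rw [add_mul, hx z, hy z, add_zero]
  zero_mem' := by
    intro y
    rw [zero_mul]
  smul_mem' := by
    intro c x hx y
    rw [smul_mul_assoc, hx y, smul_zero]

open Matrix

section Witt

variable {K : Type*} [Field K] {r : ℕ}

/-- Reflection in the hyperplane orthogonal to `v` (identity if `v` is isotropic). -/
noncomputable def reflMap (v : Fin r → K) : (Fin r → K) →ₗ[K] (Fin r → K) where
  toFun w := w - ((2 * (v ⬝ᵥ w)) / (v ⬝ᵥ v)) • v
  map_add' w₁ w₂ := by
    simp only [dotProduct_add]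
    rw [mul_add, add_div, add_smul]
    abel
  map_smul' c w := by
    simp only [dotProduct_smul, RingHom.id_apply, smul_sub, smul_smul, smul_eq_mul]
    congr 2
    field_simp

lemma reflMap_apply (v w : Fin r → K) :
    reflMap v w = w - ((2 * (v ⬝ᵥ w)) / (v ⬝ᵥ v)) • v := rfl

lemma reflMap_involutive (v : Fin r → K) (w : Fin r → K) :
    reflMap v (reflMap v w) = w := by
  by_cases hv : v ⬝ᵥ v = 0
  · simp [reflMap_apply, hv]
  · simp only [reflMap_apply, dotProduct_sub, dotProduct_smul, smul_eq_mul]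
    rw [show v ⬝ᵥ w - 2 * (v ⬝ᵥ w) / (v ⬝ᵥ v) * (v ⬝ᵥ v) = -(v ⬝ᵥ w) by field_simp; ring]
    rw [show 2 * -(v ⬝ᵥ w) / (v ⬝ᵥ v) = -(2 * (v ⬝ᵥ w) / (v ⬝ᵥ v)) by ring]
    rw [neg_smul, sub_neg_eq_add, sub_add_cancel]

noncomputable def reflEquiv (v : Fin r → K) : (Fin r → K) ≃ₗ[K] (Fin r → K) :=
  LinearEquiv.ofLinear (reflMap v) (reflMap v)
    (LinearMap.ext fun w => reflMap_involutive v w)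
    (LinearMap.ext fun w => reflMap_involutive v w)

lemma reflEquiv_apply (v w : Fin r → K) : reflEquiv v w = reflMap v w := rfl

lemma reflMap_isometry (v : Fin r → K) (hv : v ⬝ᵥ v ≠ 0) (x y : Fin r → K) :
    reflMap v x ⬝ᵥ reflMap v y = x ⬝ᵥ y := by
  simp only [reflMap_apply, dotProduct_sub, sub_dotProduct, dotProduct_smul, smul_dotProduct,
    smul_eq_mul]
  rw [dotProduct_comm v x]
  field_simp
  ring

lemma reflMap_id_isometry (v : Fin r → K) (hv : v ⬝ᵥ v = 0) (w : Fin r → K) :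
    reflMap v w = w := by simp [reflMap_apply, hv]

lemma reflMap_fixes (x y : Fin r → K) (hv : (x - y) ⬝ᵥ (x - y) ≠ 0)
    (hxx : x ⬝ᵥ x = y ⬝ᵥ y) : reflMap (x - y) x = y := by
  have key : 2 * ((x - y) ⬝ᵥ x) = (x - y) ⬝ᵥ (x - y) := by
    simp only [sub_dotProduct, dotProduct_sub]
    rw [dotProduct_comm y x, ← hxx]; ring
  rw [reflMap_apply, key, div_self hv, one_smul, sub_sub_cancel]

/-- Witt: transitivity of the orthogonal group on nonzero isotropic vectors. -/
theorem witt_isotropic (h2 : (2:K) ≠ 0) (x y : Fin r → K)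
    (hx : x ⬝ᵥ x = 0) (hy : y ⬝ᵥ y = 0) (hx0 : x ≠ 0) (hy0 : y ≠ 0) :
    ∃ E : (Fin r → K) ≃ₗ[K] (Fin r → K),
      (∀ a b, E a ⬝ᵥ E b = a ⬝ᵥ b) ∧ E x = y := by
  classical
  -- first the case where x ⬝ᵥ y ≠ 0
  have main : ∀ x y : Fin r → K, x ⬝ᵥ x = 0 → y ⬝ᵥ y = 0 → x ⬝ᵥ y ≠ 0 →
      ∃ E : (Fin r → K) ≃ₗ[K] (Fin r → K), (∀ a b, E a ⬝ᵥ E b = a ⬝ᵥ b) ∧ E x = y := by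
    intro x y hx hy hxy
    have hv : (x - y) ⬝ᵥ (x - y) ≠ 0 := by
      simp only [sub_dotProduct, dotProduct_sub, hx, hy, dotProduct_comm y x]
      intro h
      apply hxy
      have : -(2 * (x ⬝ᵥ y)) = 0 := by rw [← h]; ring
      have := neg_eq_zero.mp this
      rcases mul_eq_zero.mp this with h' | h'
      · exact absurd h' h2
      · exact h'
    exact ⟨reflEquiv (x - y), fun a b => reflMap_isometry _ hv a b,
      reflMap_fixes x y hv (by rw [hx, hy])⟩
  by_cases hxy : x ⬝ᵥ y ≠ 0
  · exact main x y hx hy hxy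
  push_neg at hxy
  -- find z' with x ⬝ᵥ z' ≠ 0 and y ⬝ᵥ z' ≠ 0
  obtain ⟨i, hi⟩ : ∃ i, x i ≠ 0 := by
    by_contra h; push_neg at h; exact hx0 (funext h)
  obtain ⟨j, hj⟩ : ∃ j, y j ≠ 0 := by
    by_contra h; push_neg at h; exact hy0 (funext h)
  have hxi : x ⬝ᵥ Pi.single i 1 = x i := by rw [dotProduct_single, mul_one]
  have hyj : y ⬝ᵥ Pi.single j 1 = y j := by rw [dotProduct_single, mul_one]
  obtain ⟨z', hxz', hyz'⟩ : ∃ z' : Fin r → K, x ⬝ᵥ z' ≠ 0 ∧ y ⬝ᵥ z' ≠ 0 := by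
    by_cases h1 : y ⬝ᵥ Pi.single i 1 ≠ 0
    · exact ⟨Pi.single i 1, by rw [hxi]; exact hi, h1⟩
    by_cases h3 : x ⬝ᵥ Pi.single j 1 ≠ 0
    · exact ⟨Pi.single j 1, h3, by rw [hyj]; exact hj⟩
    push_neg at h1 h3
    refine ⟨Pi.single i 1 + Pi.single j 1, ?_, ?_⟩
    · rw [dotProduct_add, h3, add_zero, hxi]; exact hi
    · rw [dotProduct_add, h1, zero_add, hyj]; exact hj
  -- make z isotropic, keeping the pairings
  set t : K := -(z' ⬝ᵥ z') / (2 * (x ⬝ᵥ z')) with ht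
  set z : Fin r → K := z' + t • x with hzdef
  have hzz : z ⬝ᵥ z = 0 := by
    rw [hzdef]
    simp only [dotProduct_add, add_dotProduct, dotProduct_smul, smul_dotProduct, smul_eq_mul,
      hx, dotProduct_comm x z']
    rw [ht, dotProduct_comm z' x]
    field_simp
    ring
  have hxz : x ⬝ᵥ z = x ⬝ᵥ z' := by
    rw [hzdef, dotProduct_add, dotProduct_smul, smul_eq_mul, hx, mul_zero, add_zero]
  have hyz : y ⬝ᵥ z = y ⬝ᵥ z' := by
    rw [hzdef, dotProduct_add, dotProduct_smul, smul_eq_mul, dotProduct_comm y x, hxy,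
      mul_zero, add_zero]
  have hz0 : z ≠ 0 := by
    intro h; rw [h, dotProduct_zero] at hxz; exact hxz' hxz.symm
  obtain ⟨E1, hE1iso, hE1x⟩ := main x z hx hzz (hxz ▸ hxz')
  obtain ⟨E2, hE2iso, hE2z⟩ := main z y hzz hy (by rw [dotProduct_comm z y, hyz]; exact hyz')
  exact ⟨E1.trans E2, fun a b => by simp only [LinearEquiv.trans_apply, hE2iso, hE1iso],
    by simp [LinearEquiv.trans_apply, hE1x, hE2z]⟩

end Witt

section helpers
variable {K A : Type*} [Field K] [NonUnitalNonAssocRing A] [Module K A]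
  [SMulCommClass K A A] [IsScalarTower K A A]

lemma mul_formula {ι : Type*} [Fintype ι] (b : Module.Basis ι K A)
    (hb : ∀ i j, i ≠ j → b i * b j = 0) (x y : A) :
    x * y = ∑ i, (b.repr x i * b.repr y i) • (b i * b i) := by
  classical
  have expand : ∀ i j : ι, ((b.repr x i) • b i) * ((b.repr y j) • b j)
      = (b.repr x i * b.repr y j) • (b i * b j) := fun i j => by
    rw [smul_mul_assoc, mul_smul_comm, smul_smul]
  calc x * y = (∑ i, b.repr x i • b i) * (∑ j, b.repr y j • b j) := by
        rw [b.sum_repr x, b.sum_repr y]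
    _ = ∑ i, ∑ j, (b.repr x i * b.repr y j) • (b i * b j) := by
        rw [Finset.sum_mul_sum]
        exact Finset.sum_congr rfl fun i _ => Finset.sum_congr rfl fun j _ => expand i j
    _ = ∑ i, (b.repr x i * b.repr y i) • (b i * b i) := by
        refine Finset.sum_congr rfl fun i _ => ?_
        refine Finset.sum_eq_single i (fun j _ hji => ?_) (by simp)
        rw [hb i j (Ne.symm hji), smul_zero]

end helpers

/-- canonical isotropic vector `(1, θ, 0, …, 0)` -/
def wvec {K : Type*} [Field K] (θ : K) (r : ℕ) : Fin r → K :=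
  fun k => if (k : ℕ) = 0 then 1 else if (k : ℕ) = 1 then θ else 0

lemma wvec_dot {K : Type*} [Field K] {θ : K} (hθ : θ * θ = -1) {r : ℕ} (hr : 2 ≤ r) :
    wvec θ r ⬝ᵥ wvec θ r = 0 := by
  classical
  have h0 : (0:ℕ) < r := by omega
  have h1 : (1:ℕ) < r := by omega
  have : wvec θ r = Pi.single (⟨0, h0⟩ : Fin r) 1 + Pi.single (⟨1, h1⟩ : Fin r) θ := by
    funext k
    rcases k with ⟨k, hk⟩
    simp only [wvec, Pi.add_apply, Pi.single_apply]
    by_cases e0 : k = 0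
    · subst e0; simp [Fin.ext_iff]
    · by_cases e1 : k = 1
      · subst e1; simp [Fin.ext_iff]
      · simp [Fin.ext_iff, e0, e1]
  rw [this]
  rw [add_dotProduct, dotProduct_add, dotProduct_add, single_dotProduct, single_dotProduct]
  simp only [dotProduct_single, Pi.single_apply]
  simp [Fin.ext_iff, hθ]

lemma wvec_ne_zero {K : Type*} [Field K] (θ : K) {r : ℕ} (hr : 2 ≤ r) :
    wvec θ r ≠ 0 := by
  intro h
  have h0 : (0:ℕ) < r := by omega
  have := congrFun h ⟨0, h0⟩
  simp [wvec] at this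

lemma evo_structure {K A : Type*} {ι : Type*} [Field K]
    [NonUnitalNonAssocRing A] [Module K A] [SMulCommClass K A A] [IsScalarTower K A A]
    [FiniteDimensional K A]
    (h2 : (2 : K) ≠ 0) (hqc : ∀ k : K, ∃ l : K, l * l = k) {θ : K} (hθ : θ * θ = -1)
    (b : Module.Basis ι K A) (hb : ∀ i j, i ≠ j → b i * b j = 0)
    (hdim : Module.rank K (Asq K A) = 1) (h22 : Asqsq K A = ⊥) (h3 : Acube K A ≠ ⊥) :
    ∃ (r m : ℕ), 2 ≤ r ∧ ∃ Φ : A ≃ₗ[K] (Fin r → K) × (Fin m → K),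
      ∀ x y : A, Φ (x * y) = ((Φ x).1 ⬝ᵥ (Φ y).1) • (wvec θ r, 0) := by
  classical
  haveI : Finite ι := Module.Finite.finite_basis b
  haveI : Fintype ι := Fintype.ofFinite ι
  have hsq_mem : ∀ i, b i * b i ∈ Asq K A := fun i => Submodule.subset_span ⟨b i, b i, rfl⟩
  -- rank one: get spanning vector u
  obtain ⟨u₀, hu₀ne, hu₀span⟩ := rank_eq_one_iff.mp hdim
  set u : A := (u₀ : A) with hu_def
  have hune : u ≠ 0 := fun h => hu₀ne (Subtype.ext h)
  have hspan : ∀ w ∈ Asq K A, ∃ c : K, w = c • u := by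
    intro w hw
    obtain ⟨c, hc⟩ := hu₀span ⟨w, hw⟩
    have := congrArg Subtype.val hc
    simp only [Submodule.coe_smul] at this
    exact ⟨c, this.symm⟩
  -- structure constants
  have hωex : ∀ i, ∃ c : K, b i * b i = c • u := fun i => hspan _ (hsq_mem i)
  choose ω hω using hωex
  -- multiplication formula
  have hmul : ∀ x y : A, x * y = (∑ i, ω i * (b.repr x i * b.repr y i)) • u := by
    intro x y
    rw [mul_formula b hb x y, Finset.sum_smul]
    exact Finset.sum_congr rfl fun i _ => by rw [hω i, smul_smul, mul_comm]
  -- u is in Asq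
  have humem : u ∈ Asq K A := u₀.2
  -- u * u = 0
  have huu : u * u = 0 := by
    have : u * u ∈ Asqsq K A := Submodule.subset_span ⟨u, humem, u, humem, rfl⟩
    rwa [h22, Submodule.mem_bot] at this
  -- some ω i * (repr u) i ≠ 0
  have hex : ∃ i, ω i * b.repr u i ≠ 0 := by
    by_contra hall
    push_neg at hall
    have huy : ∀ y : A, u * y = 0 := by
      intro y
      rw [hmul]
      have : ∀ i ∈ Finset.univ, ω i * (b.repr u i * b.repr y i) = 0 := fun i _ => by
        rw [← mul_assoc, hall i, zero_mul]
      rw [Finset.sum_congr rfl this, Finset.sum_const_zero, zero_smul]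
    apply h3
    rw [Acube, eq_bot_iff, Submodule.span_le]
    rintro z ⟨p, hp, y, rfl⟩
    obtain ⟨c, rfl⟩ := hspan p hp
    rw [smul_mul_assoc, huy y, smul_zero]
    exact Submodule.zero_mem _
  -- partition the index set
  set S : Finset ι := Finset.univ.filter (fun i => ω i ≠ 0) with hS_def
  set r : ℕ := S.card with hr_def
  set m : ℕ := Sᶜ.card with hm_def
  have e1 : {i // i ∈ S} ≃ Fin r := S.equivFin
  have e2 : {i // i ∉ S} ≃ Fin m :=
    (Equiv.subtypeEquivRight (fun i => (Finset.mem_compl).symm)).trans Sᶜ.equivFin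
  let ν : Fin r ⊕ Fin m ≃ ι :=
    (Equiv.sumCongr e1.symm e2.symm).trans (Equiv.sumCompl (· ∈ S))
  have hν1 : ∀ k : Fin r, ω (ν (Sum.inl k)) ≠ 0 := by
    intro k
    have : ν (Sum.inl k) = ((e1.symm k : {i // i ∈ S}) : ι) := by
      simp [ν, Equiv.sumCongr_apply]
    rw [this]
    have hmem : ((e1.symm k : {i // i ∈ S}) : ι) ∈ Finset.univ.filter (fun i => ω i ≠ 0) :=
      (e1.symm k).2
    exact (Finset.mem_filter.mp hmem).2
  have hν2 : ∀ k : Fin m, ω (ν (Sum.inr k)) = 0 := by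
    intro k
    have : ν (Sum.inr k) = ((e2.symm k : {i // i ∉ S}) : ι) := by
      simp [ν, Equiv.sumCongr_apply]
    rw [this]
    have hmem : ¬ (((e2.symm k : {i // i ∉ S}) : ι) ∈ Finset.univ.filter (fun i => ω i ≠ 0)) :=
      (e2.symm k).2
    by_contra h
    exact hmem (Finset.mem_filter.mpr ⟨Finset.mem_univ _, h⟩)
  -- rescaling
  have hdex : ∀ i, ∃ c : K, c ≠ 0 ∧ (ω i ≠ 0 → c * c * ω i = 1) := by
    intro i
    by_cases hωi : ω i = 0
    · exact ⟨1, one_ne_zero, fun h => absurd hωi h⟩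
    · obtain ⟨l, hl⟩ := hqc (ω i)⁻¹
      have hlne : l ≠ 0 := by
        intro h; rw [h, mul_zero] at hl
        exact hωi (by rwa [eq_comm, inv_eq_zero] at hl)
      exact ⟨l, hlne, fun _ => by rw [hl]; field_simp⟩
  choose d hd0 hd1 using hdex
  let b' : Module.Basis ι K A := b.isUnitSMul (fun i => (hd0 i).isUnit)
  have hb'_apply : ∀ i, b' i = d i • b i := fun i => Module.Basis.isUnitSMul_apply _ i
  let e : Module.Basis (Fin r ⊕ Fin m) K A := b'.reindex ν.symm
  have he_apply : ∀ p, e p = d (ν p) • b (ν p) := by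
    intro p
    rw [Module.Basis.reindex_apply, Equiv.symm_symm, hb'_apply]
  -- orthogonality and squares for e
  have he_orth : ∀ p q, p ≠ q → e p * e q = 0 := by
    intro p q hpq
    rw [he_apply, he_apply, smul_mul_assoc, mul_smul_comm,
      hb _ _ (fun h => hpq (ν.injective h)), smul_zero, smul_zero]
  have he_sq1 : ∀ k : Fin r, e (Sum.inl k) * e (Sum.inl k) = u := by
    intro k
    rw [he_apply, smul_mul_assoc, mul_smul_comm, hω, smul_smul, smul_smul,
      hd1 _ (hν1 k), one_smul]
  have he_sq2 : ∀ k : Fin m, e (Sum.inr k) * e (Sum.inr k) = 0 := by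
    intro k
    rw [he_apply, smul_mul_assoc, mul_smul_comm, hω, hν2, zero_smul, smul_zero, smul_zero]
  -- head and tail coordinates
  set H : A → (Fin r → K) := fun x k => e.repr x (Sum.inl k) with hH_def
  set T : A → (Fin m → K) := fun x l => e.repr x (Sum.inr l) with hT_def
  have hmul2 : ∀ x y : A, x * y = (H x ⬝ᵥ H y) • u := by
    intro x y
    rw [mul_formula e he_orth x y, Fintype.sum_sum_type]
    have t2 : ∀ k : Fin m, (e.repr x (Sum.inr k) * e.repr y (Sum.inr k)) •
        (e (Sum.inr k) * e (Sum.inr k)) = 0 := fun k => by rw [he_sq2, smul_zero]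
    rw [Finset.sum_congr rfl (fun k _ => t2 k), Finset.sum_const_zero, add_zero]
    rw [dotProduct, Finset.sum_smul]
    exact Finset.sum_congr rfl fun k _ => by rw [he_sq1]
  -- coefficients of u
  set cu : Fin r → K := H u with hcu_def
  set ct : Fin m → K := T u with hct_def
  have hcuiso : cu ⬝ᵥ cu = 0 := by
    have := (hmul2 u u).symm.trans huu
    rcases smul_eq_zero.mp this with h | h
    · exact h
    · exact absurd h hune
  have hcune : cu ≠ 0 := by
    obtain ⟨i, hi⟩ := hex
    have hby : u * b i ≠ 0 := by
      rw [hmul]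
      have hcollapse : (∑ j, ω j * (b.repr u j * b.repr (b i) j)) = ω i * b.repr u i := by
        rw [Finset.sum_eq_single i]
        · rw [Module.Basis.repr_self, Finsupp.single_eq_same, mul_one]
        · intro j _ hji
          rw [Module.Basis.repr_self, Finsupp.single_eq_of_ne hji, mul_zero, mul_zero]
        · simp
      rw [hcollapse]
      exact fun h => (smul_eq_zero.mp h).elim hi hune
    intro h
    apply hby
    rw [hmul2]
    have h' : H u = (0 : Fin r → K) := h
    rw [h', zero_dotProduct, zero_smul]
  -- r is at least 2
  have hr2 : 2 ≤ r := by
    by_contra hlt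
    push_neg at hlt
    apply hcune
    funext k
    rcases k with ⟨kk, hkk⟩
    have huniv : (Finset.univ : Finset (Fin r)) = {⟨kk, hkk⟩} :=
      Finset.eq_singleton_iff_unique_mem.mpr
        ⟨Finset.mem_univ _, fun x _ => Fin.ext (by have := x.2; omega)⟩
    rw [dotProduct, huniv, Finset.sum_singleton] at hcuiso
    exact mul_self_eq_zero.mp hcuiso
  -- Witt normalization
  obtain ⟨E, hEiso, hEcu⟩ := witt_isotropic h2 cu (wvec θ r) hcuiso (wvec_dot hθ hr2)
    hcune (wvec_ne_zero θ hr2)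
  -- pick k0 with cu k0 ≠ 0 and build the dual vector a
  obtain ⟨k0, hk0⟩ := Function.ne_iff.mp hcune
  set a : Fin r → K := (cu k0)⁻¹ • (Pi.single k0 1 : Fin r → K) with ha_def
  have hcua : cu ⬝ᵥ a = 1 := by
    rw [ha_def, dotProduct_smul, dotProduct_single, mul_one, smul_eq_mul,
      inv_mul_cancel₀ hk0]
  -- coordinate equivalence A ≃ (Fin r → K) × (Fin m → K)
  let Φ₀ : A ≃ₗ[K] (Fin r → K) × (Fin m → K) :=
    e.repr ≪≫ₗ (Finsupp.sumFinsuppLEquivProdFinsupp K) ≪≫ₗ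
      LinearEquiv.prodCongr (Finsupp.linearEquivFunOnFinite K K (Fin r))
        (Finsupp.linearEquivFunOnFinite K K (Fin m))
  have hΦ₀ : ∀ x : A, Φ₀ x = (H x, T x) := by
    intro x
    refine Prod.ext ?_ ?_
    · funext k
      simp [Φ₀, hH_def, Finsupp.linearEquivFunOnFinite,
        Finsupp.fst_sumFinsuppLEquivProdFinsupp]
      rfl
    · funext l
      simp [Φ₀, hT_def, Finsupp.linearEquivFunOnFinite,
        Finsupp.snd_sumFinsuppLEquivProdFinsupp]
      rfl
  -- the correction map G
  let Gmap : ((Fin r → K) × (Fin m → K)) →ₗ[K] ((Fin r → K) × (Fin m → K)) :=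
    { toFun := fun p => (E p.1, p.2 - (p.1 ⬝ᵥ a) • ct)
      map_add' := by
        intro p q
        refine Prod.ext (by simp) ?_
        simp only [Prod.fst_add, Prod.snd_add, add_dotProduct, add_smul]
        abel
      map_smul' := by
        intro c p
        refine Prod.ext (by simp) ?_
        show (c • p).2 - (((c • p).1) ⬝ᵥ a) • ct = (c • (E p.1, p.2 - (p.1 ⬝ᵥ a) • ct)).2
        simp only [Prod.smul_snd, Prod.smul_fst, smul_dotProduct, smul_sub, smul_eq_mul,
          mul_smul] }
  have hGbij : Function.Bijective Gmap := by
    constructor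
    · intro p q hpq
      have h1 : E p.1 = E q.1 := congrArg Prod.fst hpq
      have h1' : p.1 = q.1 := E.injective h1
      have h2' : p.2 - (p.1 ⬝ᵥ a) • ct = q.2 - (q.1 ⬝ᵥ a) • ct := congrArg Prod.snd hpq
      rw [h1'] at h2'
      exact Prod.ext h1' (sub_left_injective h2')
    · intro p
      refine ⟨(E.symm p.1, p.2 + ((E.symm p.1) ⬝ᵥ a) • ct), ?_⟩
      refine Prod.ext (by simp [Gmap]) ?_
      simp [Gmap]
  let G : ((Fin r → K) × (Fin m → K)) ≃ₗ[K] ((Fin r → K) × (Fin m → K)) :=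
    LinearEquiv.ofBijective Gmap hGbij
  refine ⟨r, m, hr2, Φ₀.trans G, ?_⟩
  intro x y
  have hG_apply : ∀ p : (Fin r → K) × (Fin m → K), G p = (E p.1, p.2 - (p.1 ⬝ᵥ a) • ct) :=
    fun p => rfl
  have hΦ : ∀ z : A, (Φ₀.trans G) z = (E (H z), T z - (H z ⬝ᵥ a) • ct) := by
    intro z
    rw [LinearEquiv.trans_apply, hΦ₀, hG_apply]
  have hΦu : (Φ₀.trans G) u = (wvec θ r, 0) := by
    rw [hΦ u, hEcu]
    have : T u - (H u ⬝ᵥ a) • ct = 0 := by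
      rw [show H u = cu from rfl, hcua, one_smul, show T u = ct from rfl, sub_self]
    rw [this]
  rw [hmul2 x y, _root_.map_smul, hΦu, hΦ x, hΦ y]
  congr 1
  exact (hEiso (H x) (H y)).symm

section Final
variable {K A : Type*} [Field K] [NonUnitalNonAssocRing A] [Module K A]
  [SMulCommClass K A A] [IsScalarTower K A A]

lemma mem_annihilator_iff {x : A} : x ∈ annihilator K A ↔ ∀ y : A, x * y = 0 := Iff.rfl

lemma ann_finrank {θ : K} {r m : ℕ} (hr : 2 ≤ r)
    (Φ : A ≃ₗ[K] (Fin r → K) × (Fin m → K))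
    (hΦ : ∀ x y : A, Φ (x * y) = ((Φ x).1 ⬝ᵥ (Φ y).1) • (wvec θ r, 0)) :
    Module.finrank K (annihilator K A) = m := by
  classical
  have hwne : (wvec θ r, (0 : Fin m → K)) ≠ 0 :=
    fun h => wvec_ne_zero θ hr (congrArg Prod.fst h)
  have hmem : ∀ x : A, x ∈ annihilator K A ↔ (Φ x).1 = 0 := by
    intro x
    rw [mem_annihilator_iff]
    constructor
    · intro hx
      funext k
      have hy := hx (Φ.symm (Pi.single k 1, 0))
      have := hΦ x (Φ.symm (Pi.single k 1, 0))
      rw [hy, map_zero] at this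
      have hcoef : ((Φ x).1 ⬝ᵥ (Φ (Φ.symm (Pi.single k 1, 0))).1) = 0 := by
        rcases smul_eq_zero.mp this.symm with h | h
        · exact h
        · exact absurd h hwne
      rw [Φ.apply_symm_apply] at hcoef
      simpa [dotProduct_single] using hcoef
    · intro hx y
      have := hΦ x y
      rw [hx, zero_dotProduct, zero_smul] at this
      exact Φ.injective (by rw [this, map_zero])
  let ψ : (annihilator K A) →ₗ[K] (Fin m → K) :=
    { toFun := fun x => (Φ x.val).2
      map_add' := by intro x y; simp
      map_smul' := by intro c x; simp }
  have hψbij : Function.Bijective ψ := by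
    constructor
    · intro x y hxy
      apply Subtype.ext
      apply Φ.injective
      refine Prod.ext ?_ hxy
      rw [(hmem x.val).mp x.2, (hmem y.val).mp y.2]
    · intro t
      have hmem' : Φ.symm (0, t) ∈ annihilator K A := by
        rw [hmem, Φ.apply_symm_apply]
      exact ⟨⟨Φ.symm (0, t), hmem'⟩, by simp [ψ]⟩
  have := LinearEquiv.finrank_eq (LinearEquiv.ofBijective ψ hψbij)
  simp only [this]
  simp

end Final

/-- Let `K` be a quadratically closed field of characteristic not two and `A`, `B`
finite-dimensional evolution `K`-algebras with `dim A² = dim B² = 1`,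
`(A²)² = (B²)² = 0`, `A³ ≠ 0` and `B³ ≠ 0`. Then `A ≅ B` if and only if
`dim A = dim B` and `dim Ann(A) = dim Ann(B)`. -/
theorem stmt19 {K A B : Type*} {ι κ : Type*} [Field K]
    [NonUnitalNonAssocRing A] [Module K A] [SMulCommClass K A A] [IsScalarTower K A A]
    [NonUnitalNonAssocRing B] [Module K B] [SMulCommClass K B B] [IsScalarTower K B B]
    [FiniteDimensional K A] [FiniteDimensional K B]
    (h2 : (2 : K) ≠ 0)
    (hqc : ∀ k : K, ∃ l : K, l * l = k)
    (hcommA : ∀ x y : A, x * y = y * x) (hcommB : ∀ x y : B, x * y = y * x)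
    (bA : Module.Basis ι K A) (hbA : ∀ i j, i ≠ j → bA i * bA j = 0)
    (bB : Module.Basis κ K B) (hbB : ∀ i j, i ≠ j → bB i * bB j = 0)
    (hdimA : Module.rank K (Asq K A) = 1) (hdimB : Module.rank K (Asq K B) = 1)
    (hA22 : Asqsq K A = ⊥) (hB22 : Asqsq K B = ⊥)
    (hA3 : Acube K A ≠ ⊥) (hB3 : Acube K B ≠ ⊥) :
    (∃ f : A ≃ₗ[K] B, ∀ x y : A, f (x * y) = f x * f y) ↔
      (Module.finrank K A = Module.finrank K B ∧
        Module.finrank K (annihilator K A) = Module.finrank K (annihilator K B)) := by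
  
  obtain ⟨θ, hθ⟩ := hqc (-1)
  constructor
  · rintro ⟨f, hf⟩
    constructor
    · exact f.finrank_eq
    · have hmap : Submodule.map (f : A →ₗ[K] B) (annihilator K A) = annihilator K B := by
        ext z
        simp only [Submodule.mem_map]
        constructor
        · rintro ⟨x, hx, rfl⟩
          intro y
          have h1 : f x * y = f x * f (f.symm y) := by rw [f.apply_symm_apply]
          rw [LinearEquiv.coe_coe, h1, ← hf, hx (f.symm y), map_zero]
        · intro hz
          refine ⟨f.symm z, ?_, f.apply_symm_apply z⟩
          intro y
          apply f.injective
          rw [map_zero, hf, f.apply_symm_apply]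
          exact hz (f y)
      exact LinearEquiv.finrank_eq (LinearEquiv.ofSubmodules f _ _ hmap)
  · rintro ⟨hdim, hann⟩
    obtain ⟨rA, mA, hrA, ΦA, hΦA⟩ := evo_structure h2 hqc hθ bA hbA hdimA hA22 hA3
    obtain ⟨rB, mB, hrB, ΦB, hΦB⟩ := evo_structure h2 hqc hθ bB hbB hdimB hB22 hB3
    have hmA : Module.finrank K (annihilator K A) = mA := ann_finrank hrA ΦA hΦA
    have hmB : Module.finrank K (annihilator K B) = mB := ann_finrank hrB ΦB hΦB
    have hm : mA = mB := by rw [← hmA, ← hmB, hann]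
    have hnA : Module.finrank K A = rA + mA := by
      rw [ΦA.finrank_eq]; simp
    have hnB : Module.finrank K B = rB + mB := by
      rw [ΦB.finrank_eq]; simp
    have hrAB : rA = rB := by omega
    subst hrAB
    subst hm
    refine ⟨ΦA.trans ΦB.symm, ?_⟩
    intro x y
    apply ΦB.injective
    have hfx : ∀ z : A, ΦB ((ΦA.trans ΦB.symm) z) = ΦA z := fun z => by
      simp [LinearEquiv.trans_apply]
    rw [hfx, hΦA, hΦB, hfx, hfx]
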